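/- arXiv:1712.08703 — 7 statements merged into one kernel-verified Lean document; each statement's English description precedes it below -/
import Mathlib

section
/- Let n ≥ 0 be an integer. For every real s with s - n > 1, the sum over all primes p of log(p) · p^{n-s} / (1 - p^{n-s}) converges, and ∑_p [ -log(1 - p^{n-s}) + s · log(p) · p^{n-s} / (1 - p^{n-s}) ] = log ζ(s-n) - s · ζ′(s-n)/ζ(s-n), where ζ is the Riemann zeta function. In other words, the global Hasse–Weil entropy of affine n-space equals (1 - s·d/ds) log ζ(s-n). -/
/-- The Riemann zeta function at real arguments, `ζ(s) = ∑_{n≥1} n^{-s}` for `s > 1`. -/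
noncomputable def zetaR (s : ℝ) : ℝ := ∑' n : ℕ, ((n : ℝ) + 1) ^ (-s)

/-!
Put `t = s - n > 1` and `x_p = p ^ (-t)`. The Euler product gives
`∑_p -log (1 - x_p) = log ζ(t)`. Expanding `log p · x_p / (1 - x_p) = ∑_{k ≥ 1} Λ(p^k) p^(-kt)`
as a geometric series and regrouping the absolutely convergent series `∑_m Λ(m) m^(-t)` by prime
powers gives `∑_p log p · x_p / (1 - x_p) = -ζ'(t)/ζ(t)`. On `(1, ∞)` the real series `zetaR`
agrees with `riemannZeta`, hence so do their derivatives, and the two sums combine linearly.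
-/

open ArithmeticFunction

theorem HasSum.primes_tsum_pow_succ {α : Type*} [AddCommGroup α] [UniformSpace α]
    [IsUniformAddGroup α] [CompleteSpace α] {f : ℕ → α} {a : α} (hf : HasSum f a)
    (hsupp : Function.support f ⊆ {n | IsPrimePow n}) :
    HasSum (fun p : Nat.Primes => ∑' k : ℕ, f ((p : ℕ) ^ (k + 1))) a := by
  have hpow : HasSum (fun pk : Nat.Primes × ℕ => f ((pk.1 : ℕ) ^ (pk.2 + 1))) a := by
    convert (Nat.Primes.prodNatEquiv.hasSum_iff (f := f ∘ Subtype.val)).mpr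
      ((hasSum_subtype_iff_of_support_subset hsupp).mpr hf) using 2 with pk
    exact congrArg f (Nat.Primes.coe_prodNatEquiv_apply pk.1 pk.2).symm
  exact hpow.prod_fiberwise fun p =>
    (hpow.summable.comp_injective (Prod.mk_right_injective p)).hasSum

theorem LSeries.term_ofReal {f : ℕ → ℝ} {t : ℝ} (ht : t ≠ 0) (m : ℕ) :
    LSeries.term (fun n => (f n : ℂ)) t m = (f m * (m : ℝ) ^ (-t) : ℝ) := by
  rw [LSeries.term_of_ne_zero' (Complex.ofReal_ne_zero.mpr ht), Real.rpow_neg (Nat.cast_nonneg m),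
    Complex.ofReal_mul, Complex.ofReal_inv, Complex.ofReal_cpow (Nat.cast_nonneg m),
    div_eq_mul_inv, Complex.ofReal_natCast]

section RiemannZetaReal

variable {t : ℝ}

theorem riemannZeta_ofReal (ht : 1 < t) : riemannZeta t = zetaR t := by
  rw [zeta_eq_tsum_one_div_nat_add_one_cpow (by simpa using ht), zetaR, Complex.ofReal_tsum]
  refine tsum_congr fun m => ?_
  rw [Complex.ofReal_cpow (by positivity), one_div, ← Complex.cpow_neg]
  push_cast
  rfl

theorem hasSum_primes_neg_log_one_sub_rpow (ht : 1 < t) :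
    HasSum (fun p : Nat.Primes => -Real.log (1 - ((p : ℕ) : ℝ) ^ (-t))) (Real.log (zetaR t)) := by
  have hsum : Summable (fun p : Nat.Primes => -Real.log (1 - ((p : ℕ) : ℝ) ^ (-t))) := by
    have hx : Summable (fun p : Nat.Primes => ((p : ℕ) : ℝ) ^ (-t)) :=
      (Real.summable_nat_rpow.mpr (by linarith)).subtype _
    simpa only [sub_eq_add_neg] using (Real.summable_log_one_add_of_summable hx.neg).neg
  have hexp : Real.exp (∑' p : Nat.Primes, -Real.log (1 - ((p : ℕ) : ℝ) ^ (-t))) = zetaR t := by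
    apply Complex.ofReal_injective
    rw [Complex.ofReal_exp, Complex.ofReal_tsum, ← riemannZeta_ofReal ht,
      ← riemannZeta_eulerProduct_exp_log (by simpa using ht)]
    refine congrArg Complex.exp (tsum_congr fun p => ?_)
    have hp_lt : ((p : ℕ) : ℝ) ^ (-t) < 1 :=
      Real.rpow_lt_one_of_one_lt_of_neg (by exact_mod_cast p.prop.one_lt) (by linarith)
    rw [Complex.ofReal_neg, Complex.ofReal_log (by linarith), Complex.ofReal_sub,
      Complex.ofReal_one, Complex.ofReal_cpow (Nat.cast_nonneg _)]
    push_cast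
    rfl
  rw [hsum.hasSum_iff, ← hexp, Real.log_exp]

theorem deriv_riemannZeta_ofReal (ht : 1 < t) : deriv riemannZeta t = deriv zetaR t := by
  have hζ : HasDerivAt riemannZeta (deriv riemannZeta t) t :=
    (differentiableAt_riemannZeta (by simpa using ht.ne')).hasDerivAt
  have heq : ∀ᶠ y : ℝ in nhds t, riemannZeta y = zetaR y :=
    (eventually_gt_nhds ht).mono fun y hy => riemannZeta_ofReal hy
  have hC : HasDerivAt (fun y : ℝ => (zetaR y : ℂ)) (deriv riemannZeta t) t :=
    hζ.comp_ofReal.congr_of_eventuallyEq (heq.mono fun y hy => hy.symm)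
  have hR : HasDerivAt zetaR (deriv riemannZeta t).re t :=
    hζ.real_of_complex.congr_of_eventuallyEq (heq.mono fun y hy => by simp [hy])
  rw [hR.deriv]
  exact hC.unique hR.ofReal_comp

theorem hasSum_vonMangoldt_mul_rpow_neg (ht : 1 < t) :
    HasSum (fun m : ℕ => Λ m * (m : ℝ) ^ (-t)) (-deriv zetaR t / zetaR t) := by
  have htC : 1 < (t : ℂ).re := by simpa using ht
  rw [← Complex.hasSum_ofReal]
  convert (LSeriesSummable_vonMangoldt htC).hasSum using 1
  · exact funext fun m => (LSeries.term_ofReal (zero_lt_one.trans ht).ne' m).symm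
  · change _ = LSeries _ _
    rw [LSeries_vonMangoldt_eq_deriv_riemannZeta_div htC, deriv_riemannZeta_ofReal ht,
      riemannZeta_ofReal ht]
    push_cast
    ring

theorem hasSum_vonMangoldt_prime_pow_mul_rpow_neg (ht : 0 < t) (p : Nat.Primes) :
    HasSum (fun k : ℕ => Λ ((p : ℕ) ^ (k + 1)) * (((p : ℕ) ^ (k + 1) : ℕ) : ℝ) ^ (-t))
      (Real.log (p : ℕ) * ((p : ℕ) : ℝ) ^ (-t) / (1 - ((p : ℕ) : ℝ) ^ (-t))) := by
  have hp0 : (0 : ℝ) ≤ (p : ℕ) := Nat.cast_nonneg _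
  have hx1 : ((p : ℕ) : ℝ) ^ (-t) < 1 :=
    Real.rpow_lt_one_of_one_lt_of_neg (by exact_mod_cast p.prop.one_lt) (by linarith)
  rw [div_eq_mul_inv]
  refine ((hasSum_geometric_of_lt_one (Real.rpow_nonneg hp0 _) hx1).mul_left
    (Real.log (p : ℕ) * ((p : ℕ) : ℝ) ^ (-t))).congr_fun fun k => ?_
  rw [vonMangoldt_apply_pow k.succ_ne_zero, vonMangoldt_apply_prime p.prop, Nat.cast_pow,
    ← Real.rpow_pow_comm hp0, pow_succ]
  ring

theorem hasSum_primes_log_mul_rpow_neg_div (ht : 1 < t) :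
    HasSum (fun p : Nat.Primes =>
      Real.log (p : ℕ) * ((p : ℕ) : ℝ) ^ (-t) / (1 - ((p : ℕ) : ℝ) ^ (-t)))
      (-deriv zetaR t / zetaR t) := by
  have hsupp : Function.support (fun m : ℕ => Λ m * (m : ℝ) ^ (-t)) ⊆ {n | IsPrimePow n} :=
    fun m hm => by_contra fun h => hm (by simp [vonMangoldt_eq_zero_iff.mpr h])
  exact ((hasSum_vonMangoldt_mul_rpow_neg ht).primes_tsum_pow_succ hsupp).congr_fun fun p =>
    ((hasSum_vonMangoldt_prime_pow_mul_rpow_neg (by linarith) p).tsum_eq).symm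

end RiemannZetaReal

/-- the global Hasse–Weil entropy of affine `n`-space equals
`(1 - s·d/ds) log ζ(s - n)`. -/
theorem stmt_3 (n : ℕ) (s : ℝ) (hs : 1 < s - n) :
    Summable (fun p : Nat.Primes =>
      Real.log ((p : ℕ) : ℝ) * ((p : ℕ) : ℝ) ^ ((n : ℝ) - s)
        / (1 - ((p : ℕ) : ℝ) ^ ((n : ℝ) - s))) ∧
    ∑' p : Nat.Primes,
        (-Real.log (1 - ((p : ℕ) : ℝ) ^ ((n : ℝ) - s))
          + s * Real.log ((p : ℕ) : ℝ) * ((p : ℕ) : ℝ) ^ ((n : ℝ) - s)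
            / (1 - ((p : ℕ) : ℝ) ^ ((n : ℝ) - s)))
      = Real.log (zetaR (s - n)) - s * deriv zetaR (s - n) / zetaR (s - n) := by
  have hA := hasSum_primes_log_mul_rpow_neg_div hs
  have hB := hasSum_primes_neg_log_one_sub_rpow hs
  rw [show (n : ℝ) - s = -(s - n) by ring]
  refine ⟨hA.summable, ?_⟩
  convert (hB.add (hA.mul_left s)).tsum_eq using 1
  · exact tsum_congr fun p => by ring
  · ring
end

section
/- Let c be an integer and t a real number with 0 < t < 1. Then -c·log(1-t) - t·log(t)·(c/(1-t)) = c · S(t,1-t) / (1-t), where S(t,1-t) = -t·log t - (1-t)·log(1-t) is the binary Shannon entropy. Equivalently, the operator (1 - t·log(t)·d/dt) applied to log (1-t)^{-c} yields c·S(t,1-t)/(1-t). -/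
/-- the motivic entropy of the Euler characteristic measure:
`(1 - t·log(t)·d/dt) log (1-t)^{-c} = c · S(t,1-t)/(1-t)` with `S` the binary
Shannon entropy. -/
theorem stmt_6 (c : ℤ) (t : ℝ) (ht0 : 0 < t) (ht1 : t < 1) :
    (-(c : ℝ) * Real.log (1 - t) - t * Real.log t * ((c : ℝ) / (1 - t))
      = (c : ℝ) * (-t * Real.log t - (1 - t) * Real.log (1 - t)) / (1 - t)) ∧
    (Real.log ((1 - t) ^ (-c)) - t * Real.log t * deriv (fun u : ℝ => Real.log ((1 - u) ^ (-c))) t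
      = (c : ℝ) * (-t * Real.log t - (1 - t) * Real.log (1 - t)) / (1 - t)) := by
  have h1 : (1 : ℝ) - t ≠ 0 := by linarith
  have hfirst : -(c : ℝ) * Real.log (1 - t) - t * Real.log t * ((c : ℝ) / (1 - t))
      = (c : ℝ) * (-t * Real.log t - (1 - t) * Real.log (1 - t)) / (1 - t) := by
    field_simp
    ring
  refine ⟨hfirst, ?_⟩
  have hfun : (fun u : ℝ => Real.log ((1 - u) ^ (-c))) =
      fun u : ℝ => (-c : ℝ) * Real.log (1 - u) := by
    funext u
    rw [Real.log_zpow]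
    push_cast
    ring
  have hd : HasDerivAt (fun u : ℝ => (-c : ℝ) * Real.log (1 - u))
      ((-c : ℝ) * (-1 / (1 - t))) t := by
    exact (((hasDerivAt_id t).const_sub 1).log h1).const_mul _
  rw [hfun, hd.deriv, Real.log_zpow]
  push_cast
  rw [← hfirst]
  field_simp
end

section
/- Let n ≥ 0 be an integer, let b : {0,1,…,2n} → ℕ, let z > 0 and t ∈ (0,1) be real numbers with z^j · t < 1 for all 0 ≤ j ≤ 2n. Define F(t) = ∑_{j=0}^{2n} (-1)^{j+1} b_j · log(1 - z^j t). Then F(t) - t·log(t)·F′(t) = ∑_{j=0}^{2n} (-1)^j · b_j · ( S(z^j t, 1 - z^j t) + z^j t · log(z^j) ) / (1 - z^j t), where S(u,1-u) = -u·log u - (1-u)·log(1-u) is the binary Shannon entropy. -/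
/-!
`F` is a signed sum of the functions `u ↦ log (1 - a u)` with `a = z ^ j`, and `F - t log t F'` is
linear in `F`, so it suffices to treat one factor. There `d/du log (1 - a u) = -a / (1 - a u)`,
and splitting `log (a t) = log a + log t` turns `t log t · a / (1 - a t)` into the binary entropy
of `a t` up to the term `a t log a`.
-/

open Real

lemma hasDerivAt_log_one_sub_mul {a t : ℝ} (h : 1 - a * t ≠ 0) :
    HasDerivAt (fun u => log (1 - a * u)) (-a / (1 - a * t)) t := by
  have hlin : HasDerivAt (fun u => 1 - a * u) (-a) t := by
    simpa using ((hasDerivAt_id t).const_mul a).const_sub 1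
  exact hlin.log h

lemma entropy_sub_mul_log_div_one_sub_mul {a t : ℝ} (ha : a ≠ 0) (ht : t ≠ 0)
    (h : 1 - a * t ≠ 0) :
    (-(a * t) * log (a * t) - (1 - a * t) * log (1 - a * t) + a * t * log a) / (1 - a * t)
      = -(log (1 - a * t) - t * log t * (-a / (1 - a * t))) := by
  rw [log_mul ha ht]
  field_simp
  ring

theorem stmt_7_general (n : ℕ) (b : ℕ → ℕ) (z t : ℝ) (hz : 0 < z) (ht0 : 0 < t)
    (hzt : ∀ j ≤ 2 * n, z ^ j * t < 1) :
    (∑ j ∈ Finset.range (2 * n + 1), (-1 : ℝ) ^ (j + 1) * (b j : ℝ) * Real.log (1 - z ^ j * t))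
      - t * Real.log t * deriv (fun u : ℝ =>
          ∑ j ∈ Finset.range (2 * n + 1),
            (-1 : ℝ) ^ (j + 1) * (b j : ℝ) * Real.log (1 - z ^ j * u)) t
      = ∑ j ∈ Finset.range (2 * n + 1),
          (-1 : ℝ) ^ j * (b j : ℝ)
            * ((-(z ^ j * t) * Real.log (z ^ j * t)
                - (1 - z ^ j * t) * Real.log (1 - z ^ j * t))
               + z ^ j * t * Real.log (z ^ j))
            / (1 - z ^ j * t) := by
  have hne : ∀ j ∈ Finset.range (2 * n + 1), 1 - z ^ j * t ≠ 0 := fun j hj =>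
    (sub_pos.2 (hzt j (Nat.lt_succ_iff.1 (Finset.mem_range.1 hj)))).ne'
  have hderiv : deriv (fun u : ℝ =>
      ∑ j ∈ Finset.range (2 * n + 1),
        (-1 : ℝ) ^ (j + 1) * (b j : ℝ) * Real.log (1 - z ^ j * u)) t
      = ∑ j ∈ Finset.range (2 * n + 1),
        (-1 : ℝ) ^ (j + 1) * (b j : ℝ) * (-z ^ j / (1 - z ^ j * t)) :=
    (HasDerivAt.fun_sum fun j hj => (hasDerivAt_log_one_sub_mul (hne j hj)).const_mul _).deriv
  rw [hderiv, Finset.mul_sum, ← Finset.sum_sub_distrib]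
  refine Finset.sum_congr rfl fun j hj => ?_
  rw [mul_div_assoc,
    entropy_sub_mul_log_div_one_sub_mul (pow_pos hz j).ne' ht0.ne' (hne j hj), pow_succ]
  ring

/-- the motivic entropy of the Poincaré polynomial measure. With
`F(t) = ∑_{j=0}^{2n} (-1)^{j+1} b_j log(1 - z^j t)` one has
`F(t) - t·log(t)·F′(t) = ∑_j (-1)^j b_j (S(z^j t, 1-z^j t) + z^j t·log(z^j))/(1 - z^j t)`. -/
theorem stmt_7 (n : ℕ) (b : ℕ → ℕ) (z t : ℝ) (hz : 0 < z) (ht0 : 0 < t) (ht1 : t < 1)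
    (hzt : ∀ j ≤ 2 * n, z ^ j * t < 1) :
    (∑ j ∈ Finset.range (2 * n + 1), (-1 : ℝ) ^ (j + 1) * (b j : ℝ) * Real.log (1 - z ^ j * t))
      - t * Real.log t * deriv (fun u : ℝ =>
          ∑ j ∈ Finset.range (2 * n + 1),
            (-1 : ℝ) ^ (j + 1) * (b j : ℝ) * Real.log (1 - z ^ j * u)) t
      = ∑ j ∈ Finset.range (2 * n + 1),
          (-1 : ℝ) ^ j * (b j : ℝ)
            * ((-(z ^ j * t) * Real.log (z ^ j * t)
                - (1 - z ^ j * t) * Real.log (1 - z ^ j * t))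
               + z ^ j * t * Real.log (z ^ j))
            / (1 - z ^ j * t) :=
  stmt_7_general n b z t hz ht0 hzt
end

section
/- Let (a_n)_{n≥1} be a sequence of real numbers such that the power series g(t) = ∑_{n≥1} a_n t^n has radius of convergence ρ > 0, and suppose there exists ε ∈ (0, min(ρ,1)) such that g(t) = t·log(t)·g′(t) for all t ∈ (0, ε). Then a_n = 0 for all n ≥ 1, i.e., g is identically zero. -/
/-!
Away from `t = 0` the equation `g = t log t · g'` says that `g / log` has derivative zero, so
`g = c · log` on `(0, ε)`. A power series is continuous at `0`, whereas `c · log t` is unbounded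
as `t → 0⁺` unless `c = 0`; hence `g` vanishes on `(0, ε)`, and by the identity theorem for power
series all of its coefficients vanish.
-/

open Filter Set Topology FormalMultilinearSeries

namespace Real

theorem eq_zero_of_tendsto_mul_log {c L : ℝ}
    (h : Tendsto (fun t => c * log t) (𝓝[>] 0) (𝓝 L)) : c = 0 := by
  by_contra hc
  have hlog : Tendsto log (𝓝[>] 0) (𝓝 (L / c)) := by
    simpa [mul_div_cancel_left₀ _ hc] using h.div_const c
  exact not_tendsto_nhds_of_tendsto_atBot tendsto_log_nhdsGT_zero _ hlog

theorem exists_eqOn_mul_log_of_eq_mul_log_mul_deriv {g : ℝ → ℝ} {a b : ℝ} (ha : 0 ≤ a)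
    (hb : b ≤ 1) (hg : DifferentiableOn ℝ g (Ioo a b))
    (hode : ∀ t ∈ Ioo a b, g t = t * log t * deriv g t) :
    ∃ c, EqOn g (fun t => c * log t) (Ioo a b) := by
  have hpos : ∀ t ∈ Ioo a b, 0 < t := fun t ht => ha.trans_lt ht.1
  have hlog : ∀ t ∈ Ioo a b, log t ≠ 0 := fun t ht => (log_neg (hpos t ht) (ht.2.trans_le hb)).ne
  have hquot : DifferentiableOn ℝ (fun t => g t / log t) (Ioo a b) :=
    hg.div (fun t ht => (differentiableAt_log (hpos t ht).ne').differentiableWithinAt) hlog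
  have hderiv : EqOn (deriv fun t => g t / log t) 0 (Ioo a b) := by
    intro t ht
    have hgt := (hg.differentiableAt (isOpen_Ioo.mem_nhds ht)).hasDerivAt
    have hq : HasDerivAt (fun t => g t / log t) _ t :=
      hgt.div (hasDerivAt_log (hpos t ht).ne') (hlog t ht)
    rw [hq.deriv, Pi.zero_apply, hode t ht]
    field_simp [(hpos t ht).ne']
    ring
  obtain ⟨c, hc⟩ := isOpen_Ioo.exists_is_const_of_deriv_eq_zero isPreconnected_Ioo hquot hderiv
  exact ⟨c, fun t ht => by rw [← hc t ht]; exact (div_mul_cancel₀ _ (hlog t ht)).symm⟩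

theorem eqOn_zero_of_eq_mul_log_mul_deriv {g : ℝ → ℝ} {ε L : ℝ} (hε : ε ≤ 1)
    (hg : DifferentiableOn ℝ g (Ioo 0 ε)) (hlim : Tendsto g (𝓝[>] 0) (𝓝 L))
    (hode : ∀ t ∈ Ioo 0 ε, g t = t * log t * deriv g t) :
    EqOn g 0 (Ioo 0 ε) := by
  obtain ⟨c, hc⟩ := exists_eqOn_mul_log_of_eq_mul_log_mul_deriv le_rfl hε hg hode
  intro t ht
  have hnhds : Ioo 0 ε ∈ 𝓝[>] (0 : ℝ) := Ioo_mem_nhdsGT (ht.1.trans ht.2)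
  have hc0 : c = 0 := eq_zero_of_tendsto_mul_log (hlim.congr' (eventuallyEq_of_mem hnhds hc))
  simp [hc ht, hc0]

end Real

theorem hasFPowerSeriesOnBall_tsum_mul_pow_succ {ρ : ℝ} (hρ : 0 < ρ) {a : ℕ → ℝ}
    (hconv : ∀ t : ℝ, |t| < ρ → Summable (fun n : ℕ => |a (n + 1) * t ^ (n + 1)|)) :
    HasFPowerSeriesOnBall (fun u : ℝ => ∑' n : ℕ, a (n + 1) * u ^ (n + 1))
      (ofScalars ℝ (Function.update a 0 0)) 0 (ENNReal.ofReal ρ) := by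
  have hsucc (n : ℕ) : Function.update a 0 0 (n + 1) = a (n + 1) :=
    Function.update_of_ne n.succ_ne_zero _ _
  have hterm (n : ℕ) (y : ℝ) :
      ofScalars ℝ (Function.update a 0 0) n (fun _ => y) = Function.update a 0 0 n * y ^ n := by
    rw [ofScalars_apply_eq, smul_eq_mul]
  refine ⟨?_, ENNReal.ofReal_pos.2 hρ, fun {y} hy => ?_⟩
  · refine ENNReal.le_of_forall_nnreal_lt fun r hr => le_radius_of_summable_norm _ ?_
    have hrρ : (r : ℝ) < ρ := by
      rwa [← ENNReal.ofReal_coe_nnreal, ENNReal.ofReal_lt_ofReal_iff hρ] at hr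
    refine (summable_nat_add_iff 1).1 ((hconv r (by rwa [NNReal.abs_eq])).congr fun n => ?_)
    rw [ofScalars_norm, Real.norm_eq_abs, hsucc, abs_mul]
    exact congrArg _ (abs_of_nonneg (by positivity))
  · rw [Metric.eball_ofReal, mem_ball_zero_iff, Real.norm_eq_abs] at hy
    simp only [hterm, zero_add]
    refine (hasSum_nat_add_iff' 1).1 ?_
    simpa [hsucc] using ((hconv y hy).of_abs).hasSum

theorem HasFPowerSeriesAt.eq_zero_of_eqOn_Ioo {E : Type*} [NormedAddCommGroup E]
    [NormedSpace ℝ E] {f : ℝ → E} {p : FormalMultilinearSeries ℝ ℝ E} {ε : ℝ}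
    (hp : HasFPowerSeriesAt f p 0) (hε : 0 < ε) (hf : EqOn f 0 (Ioo 0 ε)) : p = 0 := by
  refine hp.eq_zero_of_eventually (hp.analyticAt.frequently_zero_iff_eventually_zero.1 ?_)
  have hright : ∀ᶠ t in 𝓝[>] (0 : ℝ), f t = 0 := eventually_of_mem (Ioo_mem_nhdsGT hε) hf
  exact hright.frequently.filter_mono (nhdsWithin_mono _ fun _ ht => ne_of_gt ht)

/-- if `g(t) = ∑_{n≥1} a_n t^n` converges absolutely for `|t| < ρ` and
`g(t) = t·log(t)·g′(t)` on some interval `(0,ε)` with `0 < ε < min ρ 1`, then all `a_n`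
vanish (the kernel of `ℒ` is trivial). -/
theorem stmt_9 (ρ : ℝ) (hρ : 0 < ρ) (a : ℕ → ℝ)
    (hconv : ∀ t : ℝ, |t| < ρ → Summable (fun n : ℕ => |a (n + 1) * t ^ (n + 1)|))
    (ε : ℝ) (hε0 : 0 < ε) (hε : ε < min ρ 1)
    (hker : ∀ t ∈ Set.Ioo (0 : ℝ) ε,
      (∑' n : ℕ, a (n + 1) * t ^ (n + 1))
        = t * Real.log t * deriv (fun u : ℝ => ∑' n : ℕ, a (n + 1) * u ^ (n + 1)) t) :
    ∀ n : ℕ, a (n + 1) = 0 := by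
  have hg := hasFPowerSeriesOnBall_tsum_mul_pow_succ hρ hconv
  have hsub : Ioo 0 ε ⊆ Metric.eball 0 (ENNReal.ofReal ρ) := fun t ht => by
    rw [Metric.eball_ofReal, mem_ball_zero_iff, Real.norm_eq_abs, abs_of_pos ht.1]
    linarith [ht.2, min_le_left ρ 1]
  have hzero := Real.eqOn_zero_of_eq_mul_log_mul_deriv (hε.le.trans (min_le_right _ _))
    (hg.differentiableOn.mono hsub)
    (hg.hasFPowerSeriesAt.continuousAt.tendsto.mono_left nhdsWithin_le_nhds) hker
  have hp := hg.hasFPowerSeriesAt.eq_zero_of_eqOn_Ioo hε0 hzero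
  intro n
  simpa using congrFun ((ofScalars_series_eq_zero ℝ).1 hp) (n + 1)
end

section
/- Let I and J be countable types with degree functions deg_X : I → ℕ and deg_Y : J → ℕ taking values ≥ 1; extend to finitely supported functions by deg_X(α) = ∑_i α(i)·deg_X(i) and deg_Y(γ) = ∑_j γ(j)·deg_Y(j). Let t ∈ (0,1), assume (t^{deg_X(α)})_{α : I→₀ℕ} and (t^{deg_Y(γ)})_{γ : J→₀ℕ} are summable with positive sums Z_X(t) and Z_Y(t), and that (deg_Y(γ)·t^{deg_Y(γ)})_{γ} is summable; set P(α) = t^{deg_X(α)}/Z_X(t) and Q(γ) = t^{deg_Y(γ)}/Z_Y(t). Let δ ≥ 1 be an integer and G : (J →₀ ℕ) → (I →₀ ℕ) a map satisfying deg_X(G(γ)) = δ·deg_Y(γ) for all γ. Then ∑_γ Q(γ)·log( P(G(γ)) / Q(γ) ) = log( Z_Y(t) / Z_X(t) ) + (δ - 1)·log(t)·( ∑_γ deg_Y(γ)·t^{deg_Y(γ)} ) / Z_Y(t). -/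
/-- The degree of an effective zero-cycle `α : I →₀ ℕ`, `deg(α) = ∑_i α(i)·deg(i)`. -/
def wdeg {I : Type*} (deg : I → ℕ) (α : I →₀ ℕ) : ℕ := α.sum fun i n => n * deg i

/-- the Hasse–Weil information loss of a (degree-`δ` pullback of a) finite flat
surjective morphism:
`∑_γ Q(γ)·log(P(G γ)/Q(γ)) = log(Z_Y/Z_X) + (δ-1)·log(t)·(∑_γ deg(γ)·t^{deg γ})/Z_Y`. -/
theorem stmt_13 {I J : Type*} [Countable I] [Countable J]
    (degX : I → ℕ) (degY : J → ℕ) (hdX : ∀ i, 1 ≤ degX i) (hdY : ∀ j, 1 ≤ degY j)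
    (t : ℝ) (ht0 : 0 < t) (ht1 : t < 1)
    (hZX : Summable fun α : I →₀ ℕ => t ^ wdeg degX α)
    (hZY : Summable fun γ : J →₀ ℕ => t ^ wdeg degY γ)
    (hZXpos : 0 < ∑' α : I →₀ ℕ, t ^ wdeg degX α)
    (hZYpos : 0 < ∑' γ : J →₀ ℕ, t ^ wdeg degY γ)
    (hDY : Summable fun γ : J →₀ ℕ => (wdeg degY γ : ℝ) * t ^ wdeg degY γ)
    (δ : ℕ) (hδ : 1 ≤ δ)
    (G : (J →₀ ℕ) → (I →₀ ℕ)) (hG : ∀ γ, wdeg degX (G γ) = δ * wdeg degY γ) :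
    ∑' γ : J →₀ ℕ,
        (t ^ wdeg degY γ / ∑' γ' : J →₀ ℕ, t ^ wdeg degY γ')
          * Real.log ((t ^ wdeg degX (G γ) / ∑' β : I →₀ ℕ, t ^ wdeg degX β)
              / (t ^ wdeg degY γ / ∑' γ' : J →₀ ℕ, t ^ wdeg degY γ'))
      = Real.log ((∑' γ' : J →₀ ℕ, t ^ wdeg degY γ') / ∑' β : I →₀ ℕ, t ^ wdeg degX β)
        + ((δ : ℝ) - 1) * Real.log t
          * (∑' γ : J →₀ ℕ, (wdeg degY γ : ℝ) * t ^ wdeg degY γ)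
            / ∑' γ' : J →₀ ℕ, t ^ wdeg degY γ' := by
  set ZX := ∑' α : I →₀ ℕ, t ^ wdeg degX α with hZXdef
  set ZY := ∑' γ : J →₀ ℕ, t ^ wdeg degY γ with hZYdef
  have hZXne : ZX ≠ 0 := ne_of_gt hZXpos
  have hZYne : ZY ≠ 0 := ne_of_gt hZYpos
  have htne : t ≠ 0 := ne_of_gt ht0
  have hkey : ∀ γ : J →₀ ℕ,
      (t ^ wdeg degY γ / ZY) *
        Real.log ((t ^ wdeg degX (G γ) / ZX) / (t ^ wdeg degY γ / ZY))
      = Real.log (ZY / ZX) * (t ^ wdeg degY γ / ZY)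
        + (((δ : ℝ) - 1) * Real.log t) * ((wdeg degY γ : ℝ) * t ^ wdeg degY γ / ZY) := by
    intro γ
    have hA : (t : ℝ) ^ wdeg degX (G γ) ≠ 0 := pow_ne_zero _ htne
    have hB : (t : ℝ) ^ wdeg degY γ ≠ 0 := pow_ne_zero _ htne
    have hlog : Real.log ((t ^ wdeg degX (G γ) / ZX) / (t ^ wdeg degY γ / ZY))
        = Real.log (t ^ wdeg degX (G γ)) - Real.log ZX
          - Real.log (t ^ wdeg degY γ) + Real.log ZY := by
      rw [Real.log_div (div_ne_zero hA hZXne) (div_ne_zero hB hZYne),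
        Real.log_div hA hZXne, Real.log_div hB hZYne]
      ring
    rw [hlog, Real.log_pow, Real.log_pow, hG γ, Real.log_div hZYne hZXne]
    push_cast
    ring
  rw [tsum_congr hkey]
  have hs1 : Summable fun γ : J →₀ ℕ =>
      Real.log (ZY / ZX) * (t ^ wdeg degY γ / ZY) :=
    ((hZY.div_const ZY).mul_left _)
  have hs2 : Summable fun γ : J →₀ ℕ =>
      (((δ : ℝ) - 1) * Real.log t) * ((wdeg degY γ : ℝ) * t ^ wdeg degY γ / ZY) :=
    ((hDY.div_const ZY).mul_left _)
  rw [Summable.tsum_add hs1 hs2, tsum_mul_left, tsum_mul_left, tsum_div_const, tsum_div_const,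
    ← hZYdef, div_self hZYne]
  ring
end

section
/- Let χ_X, χ_Y, e be integers and δ ≥ 1 an integer with χ_X = δ·χ_Y + e. Then for every real t ∈ (0,1): (χ_X - χ_Y)·log(1-t) + (δ-1)·χ_Y·t·log(t)/(1-t) = ( (χ_Y - χ_X)·S(t,1-t) - e·t·log(t) ) / (1-t), where S(t,1-t) = -t·log t - (1-t)·log(1-t) is the binary Shannon entropy. In particular, when e = 0 (the étale case) the left-hand side equals (χ_Y - χ_X)·S(t,1-t)/(1-t). -/
/-- the information loss of the Euler characteristic measure for a finite flat
surjective morphism of degree `δ`, via the Riemann–Hurwitz relation `χ_X = δ·χ_Y + e`: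
`(χ_X - χ_Y)·log(1-t) + (δ-1)·χ_Y·t·log(t)/(1-t) = ((χ_Y - χ_X)·S(t,1-t) - e·t·log(t))/(1-t)`;
in the étale case `e = 0` the left-hand side equals `(χ_Y - χ_X)·S(t,1-t)/(1-t)`. -/
theorem stmt_14 (χX χY e : ℤ) (δ : ℤ) (hδ : 1 ≤ δ) (hRH : χX = δ * χY + e)
    (t : ℝ) (ht0 : 0 < t) (ht1 : t < 1) :
    (((χX : ℝ) - (χY : ℝ)) * Real.log (1 - t)
        + ((δ : ℝ) - 1) * (χY : ℝ) * t * Real.log t / (1 - t)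
      = (((χY : ℝ) - (χX : ℝ)) * (-t * Real.log t - (1 - t) * Real.log (1 - t))
          - (e : ℝ) * t * Real.log t) / (1 - t)) ∧
    (e = 0 →
      ((χX : ℝ) - (χY : ℝ)) * Real.log (1 - t)
          + ((δ : ℝ) - 1) * (χY : ℝ) * t * Real.log t / (1 - t)
        = ((χY : ℝ) - (χX : ℝ)) * (-t * Real.log t - (1 - t) * Real.log (1 - t)) / (1 - t)) := by
  have h1 : (1 : ℝ) - t ≠ 0 := by linarith
  have hX : (χX : ℝ) = (δ : ℝ) * (χY : ℝ) + (e : ℝ) := by exact_mod_cast congrArg (Int.cast : ℤ → ℝ) hRH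
  constructor
  · rw [hX]; field_simp; ring
  · intro he; subst he; rw [hX]; push_cast; field_simp; ring
end

section
/- Let I, J, K be countable types with degree functions deg_X : I → ℕ, deg_Y : J → ℕ, deg_W : K → ℕ taking values ≥ 1, extended to finitely supported functions as usual. Let t ∈ (0,1) and assume the families (t^{deg_X(α)})_α, (t^{deg_Y(γ)})_γ, (t^{deg_W(β)})_β are summable with positive sums Z_X(t), Z_Y(t), Z_W(t), and set P(α) = t^{deg_X(α)}/Z_X(t), Q(γ) = t^{deg_Y(γ)}/Z_Y(t), R(β) = t^{deg_W(β)}/Z_W(t). Let F : (I →₀ ℕ) → (J →₀ ℕ) and G : (J →₀ ℕ) → (K →₀ ℕ) satisfy deg_Y(F(α)) = deg_X(α) and deg_W(G(γ)) = deg_Y(γ) for all α, γ. Then ∑_α P(α)·log( R(G(F(α))) / P(α) ) = ∑_α P(α)·log( Q(F(α)) / P(α) ) + ∑_γ Q(γ)·log( R(G(γ)) / Q(γ) ). -/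
lemma tsum_div_tsum_mul_const {ι : Type*} (w : ι → ℝ) (hw : ∑' i, w i ≠ 0) (c : ℝ) :
    ∑' i, (w i / ∑' j, w j) * c = c := by
  rw [tsum_mul_right, tsum_div_const, div_self hw, one_mul]

lemma tsum_weight_mul_log_ratio_of_deg_eq {α β : Type*} {t : ℝ} (ht : t ≠ 0)
    (dα : α → ℕ) (dβ : β → ℕ) (f : α → β) (hf : ∀ a, dβ (f a) = dα a)
    (hZα : ∑' a, t ^ dα a ≠ 0) (hZβ : ∑' b, t ^ dβ b ≠ 0) :
    ∑' a, (t ^ dα a / ∑' a', t ^ dα a')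
        * Real.log ((t ^ dβ (f a) / ∑' b, t ^ dβ b) / (t ^ dα a / ∑' a', t ^ dα a'))
      = Real.log (∑' a, t ^ dα a) - Real.log (∑' b, t ^ dβ b) := by
  have hratio : ∀ a, (t ^ dβ (f a) / ∑' b, t ^ dβ b) / (t ^ dα a / ∑' a', t ^ dα a')
      = (∑' a', t ^ dα a') / ∑' b, t ^ dβ b := fun a => by
    rw [hf]
    field_simp [pow_ne_zero (dα a) ht, hZα, hZβ]
  simp only [hratio]
  rw [tsum_div_tsum_mul_const _ hZα, Real.log_div hZα hZβ]

theorem stmt_15_general {I J K : Type*}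
    (degX : I → ℕ) (degY : J → ℕ) (degW : K → ℕ)
    (t : ℝ) (ht0 : 0 < t)
    (hZXpos : 0 < ∑' α : I →₀ ℕ, t ^ wdeg degX α)
    (hZYpos : 0 < ∑' γ : J →₀ ℕ, t ^ wdeg degY γ)
    (hZWpos : 0 < ∑' β : K →₀ ℕ, t ^ wdeg degW β)
    (F : (I →₀ ℕ) → (J →₀ ℕ)) (G : (J →₀ ℕ) → (K →₀ ℕ))
    (hF : ∀ α, wdeg degY (F α) = wdeg degX α)
    (hG : ∀ γ, wdeg degW (G γ) = wdeg degY γ) :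
    ∑' α : I →₀ ℕ,
        (t ^ wdeg degX α / ∑' α' : I →₀ ℕ, t ^ wdeg degX α')
          * Real.log ((t ^ wdeg degW (G (F α)) / ∑' β : K →₀ ℕ, t ^ wdeg degW β)
              / (t ^ wdeg degX α / ∑' α' : I →₀ ℕ, t ^ wdeg degX α'))
      = (∑' α : I →₀ ℕ,
          (t ^ wdeg degX α / ∑' α' : I →₀ ℕ, t ^ wdeg degX α')
            * Real.log ((t ^ wdeg degY (F α) / ∑' γ : J →₀ ℕ, t ^ wdeg degY γ)
                / (t ^ wdeg degX α / ∑' α' : I →₀ ℕ, t ^ wdeg degX α')))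
        + ∑' γ : J →₀ ℕ,
            (t ^ wdeg degY γ / ∑' γ' : J →₀ ℕ, t ^ wdeg degY γ')
              * Real.log ((t ^ wdeg degW (G γ) / ∑' β : K →₀ ℕ, t ^ wdeg degW β)
                  / (t ^ wdeg degY γ / ∑' γ' : J →₀ ℕ, t ^ wdeg degY γ')) := by
  have hGF : ∀ α, wdeg degW (G (F α)) = wdeg degX α := fun α => (hG (F α)).trans (hF α)
  rw [tsum_weight_mul_log_ratio_of_deg_eq ht0.ne' _ _ (fun α => G (F α)) hGF hZXpos.ne' hZWpos.ne',
    tsum_weight_mul_log_ratio_of_deg_eq ht0.ne' _ _ F hF hZXpos.ne' hZYpos.ne',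
    tsum_weight_mul_log_ratio_of_deg_eq ht0.ne' _ _ G hG hZYpos.ne' hZWpos.ne']
  ring

/-- additivity under composition of the Hasse–Weil information loss of proper
morphisms: `I_HW((g∘f)_*) = I_HW(f_*) + I_HW(g_*)`. -/
theorem stmt_15 {I J K : Type*} [Countable I] [Countable J] [Countable K]
    (degX : I → ℕ) (degY : J → ℕ) (degW : K → ℕ)
    (hdX : ∀ i, 1 ≤ degX i) (hdY : ∀ j, 1 ≤ degY j) (hdW : ∀ k, 1 ≤ degW k)
    (t : ℝ) (ht0 : 0 < t) (ht1 : t < 1)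
    (hZX : Summable fun α : I →₀ ℕ => t ^ wdeg degX α)
    (hZY : Summable fun γ : J →₀ ℕ => t ^ wdeg degY γ)
    (hZW : Summable fun β : K →₀ ℕ => t ^ wdeg degW β)
    (hZXpos : 0 < ∑' α : I →₀ ℕ, t ^ wdeg degX α)
    (hZYpos : 0 < ∑' γ : J →₀ ℕ, t ^ wdeg degY γ)
    (hZWpos : 0 < ∑' β : K →₀ ℕ, t ^ wdeg degW β)
    (F : (I →₀ ℕ) → (J →₀ ℕ)) (G : (J →₀ ℕ) → (K →₀ ℕ))
    (hF : ∀ α, wdeg degY (F α) = wdeg degX α)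
    (hG : ∀ γ, wdeg degW (G γ) = wdeg degY γ) :
    ∑' α : I →₀ ℕ,
        (t ^ wdeg degX α / ∑' α' : I →₀ ℕ, t ^ wdeg degX α')
          * Real.log ((t ^ wdeg degW (G (F α)) / ∑' β : K →₀ ℕ, t ^ wdeg degW β)
              / (t ^ wdeg degX α / ∑' α' : I →₀ ℕ, t ^ wdeg degX α'))
      = (∑' α : I →₀ ℕ,
          (t ^ wdeg degX α / ∑' α' : I →₀ ℕ, t ^ wdeg degX α')
            * Real.log ((t ^ wdeg degY (F α) / ∑' γ : J →₀ ℕ, t ^ wdeg degY γ)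
                / (t ^ wdeg degX α / ∑' α' : I →₀ ℕ, t ^ wdeg degX α')))
        + ∑' γ : J →₀ ℕ,
            (t ^ wdeg degY γ / ∑' γ' : J →₀ ℕ, t ^ wdeg degY γ')
              * Real.log ((t ^ wdeg degW (G γ) / ∑' β : K →₀ ℕ, t ^ wdeg degW β)
                  / (t ^ wdeg degY γ / ∑' γ' : J →₀ ℕ, t ^ wdeg degY γ')) :=
  stmt_15_general degX degY degW t ht0 hZXpos hZYpos hZWpos F G hF hG
end
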